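/- arXiv:1208.5749 — 9 statements merged into one kernel-verified Lean document; each statement's English description precedes it below -/
import Mathlib

section
/- Let F be a field, let y₁,…,yₙ ∈ F be nonzero, let B be an n×n skew-symmetric integer matrix, and let k be an index. Assume the mutated element μ_k(y)_k is also nonzero. Then applying the mutation at k to the pair (μ_k(y), μ_k(B)) returns the original tuple (y₁,…,yₙ); that is, cluster variable mutation at k is an involution. -/
/-- Fomin–Zelevinsky matrix mutation at index `k`. -/
def matrixMutation {n : ℕ} (B : Matrix (Fin n) (Fin n) ℤ) (k : Fin n) :
    Matrix (Fin n) (Fin n) ℤ :=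
  fun i j =>
    if i = k ∨ j = k then -B i j
    else B i j + max (B i k) 0 * max (B k j) 0 - max (-B i k) 0 * max (-B k j) 0

/-- Fomin–Zelevinsky mutation of a cluster `y` at index `k` (exchange relation). -/
noncomputable def clusterMutation {n : ℕ} {F : Type*} [Field F]
    (y : Fin n → F) (B : Matrix (Fin n) (Fin n) ℤ) (k : Fin n) : Fin n → F :=
  fun i =>
    if i = k then
      ((∏ j, y j ^ (max (B j k) 0).toNat) + (∏ j, y j ^ (max (-B j k) 0).toNat)) / y k
    else y i

/-!
Write `P` for the exchange binomial at `k`, so that `μ_k(y)_k = P / y_k`. Since `B k k = 0`,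
`P` does not involve `y_k`, and `μ_k(B)` negates the `k`-th column of `B`, which only swaps the
two monomials of `P`. Hence the second mutation divides the same `P` by `P / y_k`, giving back
`y_k`.
-/

/-- The numerator of the exchange relation at `k`. -/
def exchangeBinomial {n : ℕ} {F : Type*} [Field F]
    (y : Fin n → F) (B : Matrix (Fin n) (Fin n) ℤ) (k : Fin n) : F :=
  (∏ j, y j ^ (max (B j k) 0).toNat) + ∏ j, y j ^ (max (-B j k) 0).toNat

theorem Finset.prod_pow_update_of_exponent_eq_zero {ι M : Type*} [Fintype ι] [DecidableEq ι]
    [CommMonoid M] (y : ι → M) (e : ι → ℕ) {k : ι} (he : e k = 0) (x : M) :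
    ∏ j, Function.update y k x j ^ e j = ∏ j, y j ^ e j := by
  refine Finset.prod_congr rfl fun j _ => ?_
  by_cases hj : j = k
  · subst hj; simp [he]
  · rw [Function.update_of_ne hj]

section

variable {n : ℕ} {F : Type*} [Field F]

theorem clusterMutation_eq_update (y : Fin n → F) (B : Matrix (Fin n) (Fin n) ℤ) (k : Fin n) :
    clusterMutation y B k = Function.update y k (exchangeBinomial y B k / y k) := by
  funext i
  by_cases hi : i = k
  · subst hi; simp [clusterMutation, exchangeBinomial]
  · simp [clusterMutation, hi]

theorem matrixMutation_apply_right_self (B : Matrix (Fin n) (Fin n) ℤ) (i k : Fin n) :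
    matrixMutation B k i k = -B i k := by
  simp [matrixMutation]

theorem exchangeBinomial_update_of_diag_eq_zero (y : Fin n → F) {B : Matrix (Fin n) (Fin n) ℤ}
    {k : Fin n} (hBkk : B k k = 0) (x : F) :
    exchangeBinomial (Function.update y k x) B k = exchangeBinomial y B k := by
  unfold exchangeBinomial
  rw [Finset.prod_pow_update_of_exponent_eq_zero _ _ (by simp [hBkk]),
    Finset.prod_pow_update_of_exponent_eq_zero _ _ (by simp [hBkk])]

theorem exchangeBinomial_of_col_neg (y : Fin n → F) {B B' : Matrix (Fin n) (Fin n) ℤ}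
    {k : Fin n} (hcol : ∀ i, B' i k = -B i k) :
    exchangeBinomial y B' k = exchangeBinomial y B k := by
  simp only [exchangeBinomial, hcol, neg_neg]
  exact add_comm _ _

theorem exchangeBinomial_mutation {y : Fin n → F} {B : Matrix (Fin n) (Fin n) ℤ} {k : Fin n}
    (hBkk : B k k = 0) :
    exchangeBinomial (clusterMutation y B k) (matrixMutation B k) k = exchangeBinomial y B k := by
  have hBkk' : matrixMutation B k k k = 0 := by
    rw [matrixMutation_apply_right_self, hBkk, neg_zero]
  rw [clusterMutation_eq_update, exchangeBinomial_update_of_diag_eq_zero _ hBkk',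
    exchangeBinomial_of_col_neg _ (matrixMutation_apply_right_self B · k)]

end

theorem clusterMutation_involutive_general {n : ℕ} {F : Type*} [Field F]
    (y : Fin n → F) (B : Matrix (Fin n) (Fin n) ℤ) (k : Fin n)
    (hB : ∀ i j, B j i = -B i j)
    (hk : clusterMutation y B k k ≠ 0) :
    clusterMutation (clusterMutation y B k) (matrixMutation B k) k = y := by
  have hBkk : B k k = 0 := by linarith [hB k k]
  have hN : exchangeBinomial y B k ≠ 0 := by
    rintro hN
    simp [clusterMutation_eq_update, hN] at hk
  rw [clusterMutation_eq_update, exchangeBinomial_mutation hBkk, clusterMutation_eq_update,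
    Function.update_idem, Function.update_self, div_div_cancel₀ hN, Function.update_eq_self]

theorem clusterMutation_involutive {n : ℕ} {F : Type*} [Field F]
    (y : Fin n → F) (B : Matrix (Fin n) (Fin n) ℤ) (k : Fin n)
    (hy : ∀ i, y i ≠ 0) (hB : ∀ i j, B j i = -B i j)
    (hk : clusterMutation y B k k ≠ 0) :
    clusterMutation (clusterMutation y B k) (matrixMutation B k) k = y :=
  clusterMutation_involutive_general y B k hB hk
end

section
/- Let F = ℚ(x₁,…,xₙ) be the field of rational functions in n indeterminates over ℚ. Suppose y₁,…,yₙ ∈ F are algebraically independent over ℚ and generate F as a field extension of ℚ. Let B be an n×n skew-symmetric integer matrix and k an index. Then the mutated tuple μ_k(y)₁,…,μ_k(y)ₙ is again algebraically independent over ℚ and generates F as a field extension of ℚ; that is, the mutation of a seed is again a seed. -/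
open Function Set

theorem Transcendental.of_mul_eq_algebraMap {R K : Type*} [CommRing R] [Field K] [Algebra R K]
    {u v : K} {f : R} (hu : Transcendental R u) (huv : u * v = algebraMap R K f)
    (hf : algebraMap R K f ≠ 0) : Transcendental R v := by
  intro hv
  have hv0 : v ≠ 0 := by rintro rfl; exact hf (by simpa using huv.symm)
  have hu_eq : u = f • v⁻¹ := by rw [Algebra.smul_def, ← huv, mul_inv_cancel_right₀ hv0]
  exact hu (hu_eq ▸ hv.inv.smul f)

section

variable {ι R A : Type*} [CommRing R] [CommRing A] [Algebra R A] {x : ι → A}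

theorem algebraicIndependent_iff_algebraicIndepOn_compl_and_transcendental (k : ι) :
    AlgebraicIndependent R x ↔
      AlgebraicIndepOn R x {k}ᶜ ∧ Transcendental (Algebra.adjoin R (x '' {k}ᶜ)) (x k) := by
  rw [← AlgebraicIndepOn.univ, ← AlgebraicIndepOn.insert_iff (by simp : k ∉ ({k}ᶜ : Set ι)),
    insert_eq, union_compl_self]

theorem AlgebraicIndependent.prod_pow_add_prod_pow_ne_zero [CharZero R] [Fintype ι]
    (hx : AlgebraicIndependent R x) (e₁ e₂ : ι → ℕ) :
    ∏ i, x i ^ e₁ i + ∏ i, x i ^ e₂ i ≠ 0 := by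
  set P : MvPolynomial ι R := ∏ i, MvPolynomial.X i ^ e₁ i + ∏ i, MvPolynomial.X i ^ e₂ i
  have hP : P ≠ 0 := fun h ↦ two_ne_zero (α := R) <| by
    simpa [P, one_add_one_eq_two] using congrArg (MvPolynomial.eval 1) h
  simpa [P, map_prod] using (map_ne_zero_iff _ hx).mpr hP

theorem prod_pow_mem_adjoin_image_compl [Fintype ι] {k : ι} {e : ι → ℕ} (he : e k = 0) :
    ∏ i, x i ^ e i ∈ Algebra.adjoin R (x '' {k}ᶜ) := by
  refine prod_mem fun i _ ↦ ?_
  obtain rfl | hi := eq_or_ne i k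
  · simp [he]
  · exact pow_mem (Algebra.subset_adjoin (mem_image_of_mem x hi)) _

end

section

variable {ι F K : Type*} [DecidableEq ι] [Field F] [Field K] [Algebra F K] {x : ι → K} {k : ι}
  {f : K}

theorem AlgebraicIndependent.update_div (hx : AlgebraicIndependent F x)
    (hf : f ∈ Algebra.adjoin F (x '' {k}ᶜ)) (hf0 : f ≠ 0) :
    AlgebraicIndependent F (update x k (f / x k)) := by
  have hxk := hx.ne_zero k
  have hEq : EqOn (update x k (f / x k)) x {k}ᶜ := fun i hi ↦ update_of_ne hi ..
  rw [algebraicIndependent_iff_algebraicIndepOn_compl_and_transcendental k] at hx ⊢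
  rw [AlgebraicIndepOn, funext fun i : ({k}ᶜ : Set ι) ↦ hEq i.2, hEq.image_eq, update_self]
  refine ⟨hx.1, hx.2.of_mul_eq_algebraMap (f := ⟨f, hf⟩) ?_ hf0⟩
  exact mul_div_cancel₀ f hxk

theorem IntermediateField.adjoin_range_update_div (hf : f ∈ Algebra.adjoin F (x '' {k}ᶜ))
    (hf0 : f ≠ 0) :
    adjoin F (range (update x k (f / x k))) = adjoin F (range x) := by
  have hf' {S : Set K} (hS : x '' {k}ᶜ ⊆ S) : f ∈ adjoin F S :=
    algebra_adjoin_le_adjoin F _ (Algebra.adjoin_mono hS hf)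
  have hEq : EqOn (update x k (f / x k)) x {k}ᶜ := fun i hi ↦ update_of_ne hi ..
  apply le_antisymm <;> rw [adjoin_le_iff] <;> rintro _ ⟨i, rfl⟩
  · obtain rfl | hi := eq_or_ne i k
    · rw [update_self]
      exact div_mem (hf' (image_subset_range _ _)) (subset_adjoin F _ (mem_range_self i))
    · exact update_of_ne hi .. ▸ subset_adjoin F _ (mem_range_self i)
  · obtain rfl | hi := eq_or_ne i k
    · have hk : f / x i ∈ adjoin F (range (update x i (f / x i))) := by
        simpa using subset_adjoin F _ (mem_range_self (f := update x i (f / x i)) i)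
      simpa [div_div_cancel₀ hf0] using div_mem (hf' (hEq.image_eq ▸ image_subset_range _ _)) hk
    · exact update_of_ne hi (f / x k) x ▸ subset_adjoin F _ (mem_range_self i)

end

theorem clusterMutation_eq_update_s3 {n : ℕ} {F : Type*} [Field F] (y : Fin n → F)
    (B : Matrix (Fin n) (Fin n) ℤ) (k : Fin n) :
    clusterMutation y B k = update y k
      ((∏ j, y j ^ (max (B j k) 0).toNat + ∏ j, y j ^ (max (-B j k) 0).toNat) / y k) := by
  ext i
  obtain rfl | hi := eq_or_ne i k <;> simp [clusterMutation, *]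

/-- The mutation of a seed in `ℚ(x₁,…,xₙ)` is again a seed: the mutated cluster is
algebraically independent over `ℚ` and generates the field of rational functions. -/
theorem clusterMutation_isSeed {n : ℕ}
    (y : Fin n → FractionRing (MvPolynomial (Fin n) ℚ))
    (hind : AlgebraicIndependent ℚ y)
    (hgen : IntermediateField.adjoin ℚ (Set.range y) = ⊤)
    (B : Matrix (Fin n) (Fin n) ℤ) (hB : ∀ i j, B j i = -B i j) (k : Fin n) :
    AlgebraicIndependent ℚ (clusterMutation y B k) ∧
      IntermediateField.adjoin ℚ (Set.range (clusterMutation y B k)) = ⊤ := by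
  have hBkk : B k k = 0 := by linarith [hB k k]
  have hf : ∏ j, y j ^ (max (B j k) 0).toNat + ∏ j, y j ^ (max (-B j k) 0).toNat ∈
      Algebra.adjoin ℚ (y '' {k}ᶜ) :=
    add_mem (prod_pow_mem_adjoin_image_compl (by simp [hBkk]))
      (prod_pow_mem_adjoin_image_compl (by simp [hBkk]))
  have hf0 := hind.prod_pow_add_prod_pow_ne_zero (fun j ↦ (max (B j k) 0).toNat)
    (fun j ↦ (max (-B j k) 0).toNat)
  rw [clusterMutation_eq_update_s3]
  exact ⟨hind.update_div hf hf0, IntermediateField.adjoin_range_update_div hf hf0 ▸ hgen⟩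
end

section
/- Take a = 1 in the rank-2 cluster recurrence. Then every x_k is nonzero, and explicitly x₃ = (1 + X₂)/X₁, x₄ = (1 + X₁ + X₂)/(X₁X₂), x₅ = (1 + X₁)/X₂, x₆ = X₁, x₇ = X₂; consequently the sequence is periodic with period 5: x_{k+5} = x_k for all k ≥ 1. -/
/-- The field `ℚ(X₁, X₂)` of rational functions in two indeterminates over `ℚ`. -/
noncomputable abbrev F2 : Type := FractionRing (MvPolynomial (Fin 2) ℚ)

noncomputable def X₁ : F2 := algebraMap (MvPolynomial (Fin 2) ℚ) F2 (MvPolynomial.X 0)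
noncomputable def X₂ : F2 := algebraMap (MvPolynomial (Fin 2) ℚ) F2 (MvPolynomial.X 1)

/-- The rank-2 cluster recurrence: `x 1 = X₁`, `x 2 = X₂`,
`x (k+1) = (1 + x k ^ a) / x (k-1)` for `k ≥ 2`.  (`x 0` is a junk value.) -/
noncomputable def clusterSeq (a : ℕ) : ℕ → F2
  | 0 => 1
  | 1 => X₁
  | 2 => X₂
  | n + 3 => (1 + clusterSeq a (n + 2) ^ a) / clusterSeq a (n + 1)

/-!
For `a = 1` the recurrence is Lyness' 5-cycle: direct computation gives `x₆ = X₁` and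
`x₇ = X₂`, and since every term is determined by the two preceding ones, the sequence repeats
with period 5. The only divisors met along the way are `X₁`, `X₂`, `1 + X₁`, `1 + X₂` and
`1 + X₁ + X₂`, images of variables or of polynomials with nonzero constant term, so the junk
value `x / 0 = 0` never occurs.
-/

theorem clusterSeq_add_three (a n : ℕ) :
    clusterSeq a (n + 3) = (1 + clusterSeq a (n + 2) ^ a) / clusterSeq a (n + 1) := rfl

theorem clusterSeq_periodic_of_eq {a p : ℕ} (h₁ : clusterSeq a (p + 1) = X₁)
    (h₂ : clusterSeq a (p + 2) = X₂) :
    Function.Periodic (fun k ↦ clusterSeq a (k + 1)) p := by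
  intro k
  change clusterSeq a (k + p + 1) = clusterSeq a (k + 1)
  induction k using Nat.twoStepInduction with
  | zero => rwa [zero_add]
  | one => rwa [add_comm 1 p]
  | more n ih₀ ih₁ =>
    rw [show n + 2 + p + 1 = n + p + 3 by omega, clusterSeq_add_three,
      show n + p + 2 = n + 1 + p + 1 by omega, ih₀, ih₁]
    rfl

section Nonvanishing

open MvPolynomial

theorem algebraMap_F2_ne_zero {p : MvPolynomial (Fin 2) ℚ} (hp : p ≠ 0) :
    algebraMap (MvPolynomial (Fin 2) ℚ) F2 p ≠ 0 :=
  (map_ne_zero_iff _ (IsFractionRing.injective (MvPolynomial (Fin 2) ℚ) F2)).mpr hp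

theorem one_add_algebraMap_F2_ne_zero {p : MvPolynomial (Fin 2) ℚ} (hp : constantCoeff p = 0) :
    1 + algebraMap (MvPolynomial (Fin 2) ℚ) F2 p ≠ 0 := by
  rw [← map_one (algebraMap (MvPolynomial (Fin 2) ℚ) F2), ← map_add]
  refine algebraMap_F2_ne_zero fun h ↦ ?_
  simpa [hp] using congrArg constantCoeff h

theorem X₁_ne_zero : X₁ ≠ 0 := algebraMap_F2_ne_zero (X_ne_zero 0)

theorem X₂_ne_zero : X₂ ≠ 0 := algebraMap_F2_ne_zero (X_ne_zero 1)

theorem one_add_X₁_ne_zero : 1 + X₁ ≠ 0 :=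
  one_add_algebraMap_F2_ne_zero (constantCoeff_X (R := ℚ) 0)

theorem one_add_X₂_ne_zero : 1 + X₂ ≠ 0 :=
  one_add_algebraMap_F2_ne_zero (constantCoeff_X (R := ℚ) 1)

theorem one_add_X₁_add_X₂_ne_zero : 1 + X₁ + X₂ ≠ 0 := by
  rw [add_assoc, X₁, X₂, ← map_add]
  exact one_add_algebraMap_F2_ne_zero (by simp)

end Nonvanishing

theorem clusterSeq_one_three : clusterSeq 1 3 = (1 + X₂) / X₁ := by
  simp [clusterSeq]

theorem clusterSeq_one_four : clusterSeq 1 4 = (1 + X₁ + X₂) / (X₁ * X₂) := by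
  change (1 + clusterSeq 1 3 ^ 1) / X₂ = _
  rw [clusterSeq_one_three, pow_one]
  field_simp [X₁_ne_zero, X₂_ne_zero]
  ring

theorem clusterSeq_one_five : clusterSeq 1 5 = (1 + X₁) / X₂ := by
  rw [clusterSeq_add_three, clusterSeq_one_four, clusterSeq_one_three, pow_one]
  field_simp [X₁_ne_zero, X₂_ne_zero, one_add_X₂_ne_zero]
  ring

theorem clusterSeq_one_six : clusterSeq 1 6 = X₁ := by
  rw [clusterSeq_add_three, clusterSeq_one_five, clusterSeq_one_four, pow_one]
  field_simp [X₁_ne_zero, X₂_ne_zero, one_add_X₁_add_X₂_ne_zero]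
  ring

theorem clusterSeq_one_seven : clusterSeq 1 7 = X₂ := by
  rw [clusterSeq_add_three, clusterSeq_one_six, clusterSeq_one_five, pow_one]
  field_simp [X₂_ne_zero, one_add_X₁_ne_zero]

theorem clusterSeq_one_periodic : Function.Periodic (fun k ↦ clusterSeq 1 (k + 1)) 5 :=
  clusterSeq_periodic_of_eq clusterSeq_one_six clusterSeq_one_seven

theorem clusterSeq_one_ne_zero {k : ℕ} (hk : 1 ≤ k) : clusterSeq 1 k ≠ 0 := by
  obtain ⟨k, rfl⟩ := Nat.exists_eq_add_of_le' hk
  rw [← clusterSeq_one_periodic.map_mod_nat]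
  have : k % 5 < 5 := Nat.mod_lt _ (by norm_num)
  interval_cases k % 5
  · exact X₁_ne_zero
  · exact X₂_ne_zero
  · rw [clusterSeq_one_three]; exact div_ne_zero one_add_X₂_ne_zero X₁_ne_zero
  · rw [clusterSeq_one_four]
    exact div_ne_zero one_add_X₁_add_X₂_ne_zero (mul_ne_zero X₁_ne_zero X₂_ne_zero)
  · rw [clusterSeq_one_five]; exact div_ne_zero one_add_X₁_ne_zero X₂_ne_zero

theorem clusterSeq_period_five :
    (∀ k ≥ 1, clusterSeq 1 k ≠ 0) ∧
    clusterSeq 1 3 = (1 + X₂) / X₁ ∧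
    clusterSeq 1 4 = (1 + X₁ + X₂) / (X₁ * X₂) ∧
    clusterSeq 1 5 = (1 + X₁) / X₂ ∧
    clusterSeq 1 6 = X₁ ∧
    clusterSeq 1 7 = X₂ ∧
    (∀ k ≥ 1, clusterSeq 1 (k + 5) = clusterSeq 1 k) := by
  refine ⟨fun k ↦ clusterSeq_one_ne_zero, clusterSeq_one_three, clusterSeq_one_four,
    clusterSeq_one_five, clusterSeq_one_six, clusterSeq_one_seven, fun k hk ↦ ?_⟩
  obtain ⟨k, rfl⟩ := Nat.exists_eq_add_of_le' hk
  simpa only [add_right_comm] using clusterSeq_one_periodic k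
end

section
/- For every integer a ≥ 1 and every k ≥ 1, the element x_k of the rank-2 cluster recurrence is nonzero and lies in the subring ℤ[X₁, X₂, X₁⁻¹, X₂⁻¹] of ℚ(X₁, X₂); that is, every cluster variable is a Laurent polynomial with integer coefficients in the initial cluster variables X₁, X₂ (the Laurent phenomenon in rank 2). -/
/-!
Every `x k` is a quotient of two polynomials that are positive at `X₁ = X₂ = 1`, since this
property survives `f, g ↦ (1 + f ^ a) / g`; in particular `x k ≠ 0`,
which is not automatic since `1 + f ^ a` vanishes at `f = -1` for odd `a`.

For Laurentness, let `x₀, …, x₃` lie in a ring `A` with `x₂ x₀ = 1 + x₁ ^ a` and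
`x₃ x₁ = 1 + x₂ ^ a`. Then `x₂ x₀ - x₁ ^ (a - 1) x₁ = 1`, so `x₂` and `x₁ ^ a` are coprime, and
both divide `x₁ ^ a (1 + x₃ ^ a) = x₁ ^ a + (1 + x₂ ^ a) ^ a ≡ x₂ x₀ [mod x₂]`. Hence
`x₄ = (1 + x₃ ^ a) / x₂ = x₁ ^ a (1 + x₃ ^ a) / (x₂ x₁ ^ a)` lies in `A` again.
-/

section PositiveFraction

variable {R K 𝕜 : Type*} [CommRing R] [Field K] [Algebra R K] [Semiring 𝕜] [PartialOrder 𝕜]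
  (φ : R →+* 𝕜)

def IsPosFraction (f : K) : Prop :=
  ∃ p q : R, 0 < φ p ∧ 0 < φ q ∧ f = algebraMap R K p / algebraMap R K q

variable {φ}

theorem algebraMap_ne_zero_of_pos [IsFractionRing R K] {p : R} (hp : 0 < φ p) :
    algebraMap R K p ≠ 0 := by
  rw [Ne, IsFractionRing.to_map_eq_zero_iff]
  rintro rfl
  simp at hp

theorem IsPosFraction.ne_zero [IsFractionRing R K] {f : K} (hf : IsPosFraction φ f) : f ≠ 0 := by
  obtain ⟨p, q, hp, hq, rfl⟩ := hf
  exact div_ne_zero (algebraMap_ne_zero_of_pos hp) (algebraMap_ne_zero_of_pos hq)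

variable [IsStrictOrderedRing 𝕜]

theorem isPosFraction_algebraMap {p : R} (hp : 0 < φ p) : IsPosFraction φ (algebraMap R K p) :=
  ⟨p, 1, hp, by simp, by simp⟩

theorem isPosFraction_one : IsPosFraction φ (1 : K) :=
  ⟨1, 1, by simp, by simp, by simp⟩

theorem IsPosFraction.add [IsFractionRing R K] {f g : K} (hf : IsPosFraction φ f)
    (hg : IsPosFraction φ g) : IsPosFraction φ (f + g) := by
  obtain ⟨p, q, hp, hq, rfl⟩ := hf
  obtain ⟨r, s, hr, hs, rfl⟩ := hg
  refine ⟨p * s + q * r, q * s, by simp only [map_add, map_mul]; positivity,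
    by simp only [map_mul]; positivity, ?_⟩
  rw [div_add_div _ _ (algebraMap_ne_zero_of_pos hq) (algebraMap_ne_zero_of_pos hs)]
  simp only [map_add, map_mul]

theorem IsPosFraction.mul {f g : K} (hf : IsPosFraction φ f) (hg : IsPosFraction φ g) :
    IsPosFraction φ (f * g) := by
  obtain ⟨p, q, hp, hq, rfl⟩ := hf
  obtain ⟨r, s, hr, hs, rfl⟩ := hg
  exact ⟨p * r, q * s, by simp only [map_mul]; positivity, by simp only [map_mul]; positivity,
    by rw [div_mul_div_comm, map_mul, map_mul]⟩

theorem IsPosFraction.pow {f : K} (hf : IsPosFraction φ f) (n : ℕ) : IsPosFraction φ (f ^ n) := by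
  induction n with
  | zero => simpa using isPosFraction_one
  | succ n ih => rw [pow_succ]; exact ih.mul hf

omit [IsStrictOrderedRing 𝕜] in
theorem IsPosFraction.inv {f : K} (hf : IsPosFraction φ f) : IsPosFraction φ f⁻¹ := by
  obtain ⟨p, q, hp, hq, rfl⟩ := hf
  exact ⟨q, p, hq, hp, inv_div _ _⟩

theorem IsPosFraction.div {f g : K} (hf : IsPosFraction φ f) (hg : IsPosFraction φ g) :
    IsPosFraction φ (f / g) :=
  div_eq_mul_inv f g ▸ hf.mul hg.inv

end PositiveFraction

theorem dvd_of_exchange {R : Type*} [CommRing R] {a : ℕ} (ha : 1 ≤ a) {x₀ x₁ x₂ x₃ : R}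
    (h₁ : x₂ * x₀ = 1 + x₁ ^ a) (h₂ : x₃ * x₁ = 1 + x₂ ^ a) :
    x₂ * x₁ ^ a ∣ x₁ ^ a * (1 + x₃ ^ a) := by
  have hcop : IsCoprime x₂ (x₁ ^ a) :=
    IsCoprime.pow_right ⟨x₀, -x₁ ^ (a - 1), by
      rw [neg_mul, ← pow_succ, Nat.sub_add_cancel ha]; linear_combination h₁⟩
  have hexp : x₁ ^ a * (1 + x₃ ^ a) = x₂ * x₀ + ((1 + x₂ ^ a) ^ a - 1 ^ a) := by
    linear_combination (-1 : R) * h₁ + congrArg (· ^ a) h₂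
  have hx₂ : x₂ ∣ x₁ ^ a * (1 + x₃ ^ a) := by
    rw [hexp]
    refine dvd_add (dvd_mul_right _ _) ((dvd_pow_self x₂ (Nat.one_le_iff_ne_zero.mp ha)).trans ?_)
    simpa using sub_dvd_pow_sub_pow (1 + x₂ ^ a) 1 a
  exact hcop.mul_dvd hx₂ (dvd_mul_right _ _)

namespace Subring

variable {K : Type*} [CommRing K] [IsDomain K] (A : Subring K) {a : ℕ}

theorem mem_of_exchange (ha : 1 ≤ a) {x₀ x₁ x₂ x₃ x₄ : K} (hx₁ : x₁ ≠ 0) (hx₂ : x₂ ≠ 0)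
    (h₁ : x₂ * x₀ = 1 + x₁ ^ a) (h₂ : x₃ * x₁ = 1 + x₂ ^ a) (h₃ : x₄ * x₂ = 1 + x₃ ^ a)
    (m₀ : x₀ ∈ A) (m₁ : x₁ ∈ A) (m₂ : x₂ ∈ A) (m₃ : x₃ ∈ A) : x₄ ∈ A := by
  obtain ⟨c, hc⟩ := dvd_of_exchange (R := A) (x₀ := ⟨x₀, m₀⟩) (x₁ := ⟨x₁, m₁⟩) (x₂ := ⟨x₂, m₂⟩)
    (x₃ := ⟨x₃, m₃⟩) ha (Subtype.ext h₁) (Subtype.ext h₂)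
  have hc' : x₁ ^ a * (1 + x₃ ^ a) = x₂ * x₁ ^ a * c := congrArg Subtype.val hc
  have hx₄ : x₄ = c :=
    mul_right_cancel₀ (mul_ne_zero hx₂ (pow_ne_zero a hx₁)) (by linear_combination x₁ ^ a * h₃ + hc')
  exact hx₄ ▸ c.2

theorem mem_of_exchange_seq (ha : 1 ≤ a) {x : ℕ → K} (hx : ∀ n, x n ≠ 0)
    (hrel : ∀ n, x (n + 2) * x n = 1 + x (n + 1) ^ a) (h : ∀ n < 4, x n ∈ A) (n : ℕ) :
    x n ∈ A := by
  induction n using Nat.strong_induction_on with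
  | _ n ih =>
    obtain hn | ⟨m, rfl⟩ : n < 4 ∨ ∃ m, n = m + 4 := by
      rcases lt_or_ge n 4 with hn | hn
      exacts [.inl hn, .inr (Nat.exists_eq_add_of_le' hn)]
    · exact h n hn
    · exact A.mem_of_exchange ha (hx _) (hx _) (hrel m) (hrel (m + 1)) (hrel (m + 2))
        (ih m (by omega)) (ih _ (by omega)) (ih _ (by omega)) (ih _ (by omega))

end Subring

theorem clusterSeq_isPosFraction (a n : ℕ) :
    IsPosFraction (MvPolynomial.eval (fun _ : Fin 2 => (1 : ℚ))) (clusterSeq a (n + 1)) := by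
  induction n using Nat.twoStepInduction with
  | zero => exact isPosFraction_algebraMap (by simp)
  | one => exact isPosFraction_algebraMap (by simp)
  | more n ih₁ ih₂ => exact (isPosFraction_one.add (ih₂.pow a)).div ih₁

theorem clusterSeq_ne_zero (a n : ℕ) : clusterSeq a (n + 1) ≠ 0 :=
  (clusterSeq_isPosFraction a n).ne_zero

theorem clusterSeq_exchange (a n : ℕ) :
    clusterSeq a (n + 3) * clusterSeq a (n + 1) = 1 + clusterSeq a (n + 2) ^ a :=
  div_mul_cancel₀ _ (clusterSeq_ne_zero a n)

/-- The Laurent phenomenon in rank 2: every cluster variable is a nonzero Laurent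
polynomial with integer coefficients in `X₁, X₂`. -/
theorem clusterSeq_laurent (a : ℕ) (ha : 1 ≤ a) (k : ℕ) (hk : 1 ≤ k) :
    clusterSeq a k ≠ 0 ∧
      clusterSeq a k ∈ Subring.closure ({X₁, X₂, X₁⁻¹, X₂⁻¹} : Set F2) := by
  set A := Subring.closure ({X₁, X₂, X₁⁻¹, X₂⁻¹} : Set F2)
  have hX₁ : X₁ ∈ A := Subring.subset_closure (by simp)
  have hX₂ : X₂ ∈ A := Subring.subset_closure (by simp)
  have hX₁_inv : X₁⁻¹ ∈ A := Subring.subset_closure (by simp)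
  have hX₂_inv : X₂⁻¹ ∈ A := Subring.subset_closure (by simp)
  have hstep {f g : F2} (hf : f ∈ A) (hg : g⁻¹ ∈ A) : (1 + f ^ a) / g ∈ A :=
    div_eq_mul_inv (1 + f ^ a) g ▸ A.mul_mem (A.add_mem A.one_mem (A.pow_mem hf a)) hg
  obtain ⟨n, rfl⟩ := Nat.exists_eq_add_of_le' hk
  refine ⟨clusterSeq_ne_zero a n, A.mem_of_exchange_seq ha (clusterSeq_ne_zero a)
    (clusterSeq_exchange a) (fun m hm => ?_) n⟩
  have hx₃ : clusterSeq a 3 ∈ A := hstep hX₂ hX₁_inv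
  interval_cases m
  exacts [hX₁, hX₂, hx₃, hstep hx₃ hX₂_inv]
end

section
/- For every integer a ≥ 2, the set {x_k : k ≥ 1} of elements of ℚ(X₁, X₂) produced by the rank-2 cluster recurrence is infinite; in particular the sequence (x_k) is not periodic and the corresponding cluster algebra has infinitely many cluster variables. -/
/-!
Send `ℚ(X₁, X₂)` into `F1(t)`, `F1 = ℚ(X₁)`, by `X₂ ↦ t`, and follow `d k = deg_t x k`.
Then `d 1 = 0 < d 2 = 1`, and while `d k > 0` the numerator `1 + x k ^ a` has degree `a * d k`,
so `d (k + 1) = a * d k - d (k - 1) ≥ 2 * d k - d (k - 1) > d k`.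
Strictly increasing degrees force the `x k` to be pairwise distinct.
-/

namespace RatFunc

variable {K : Type*} [Field K]

theorem intDegree_pow (x : RatFunc K) (n : ℕ) : (x ^ n).intDegree = n * x.intDegree := by
  by_cases hx : x = 0
  · rcases n with _ | n <;> simp [hx]
  induction n with
  | zero => simp
  | succ n ih =>
    rw [pow_succ, intDegree_mul (pow_ne_zero n hx) hx, ih]
    push_cast
    ring

theorem ne_zero_of_intDegree_ne_zero {x : RatFunc K} (hx : x.intDegree ≠ 0) : x ≠ 0 := by
  rintro rfl
  exact hx intDegree_zero

theorem intDegree_add_eq_right_of_lt {x y : RatFunc K} (hy : y ≠ 0)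
    (hxy : x.intDegree < y.intDegree) : (x + y).intDegree = y.intDegree := by
  by_cases hx : x = 0
  · rw [hx, zero_add]
  have hsum : x + y ≠ 0 := fun h => by
    rw [eq_neg_of_add_eq_zero_right h, intDegree_neg] at hxy
    exact hxy.false
  refine le_antisymm ((intDegree_add_le hy hsum).trans (max_le hxy.le le_rfl)) ?_
  have h := intDegree_add_le (x := -x) hsum (by simpa using hy)
  rw [neg_add_cancel_left, intDegree_neg] at h
  exact (le_max_iff.mp h).resolve_left hxy.not_ge

theorem intDegree_one_add_of_pos {z : RatFunc K} (hz : 0 < z.intDegree) :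
    (1 + z).intDegree = z.intDegree :=
  intDegree_add_eq_right_of_lt (ne_zero_of_intDegree_ne_zero hz.ne') (by rwa [intDegree_one])

theorem strictMono_intDegree_of_clusterRecurrence {a : ℕ} (ha : 2 ≤ a) {u : ℕ → RatFunc K}
    (hrec : ∀ n, u (n + 2) = (1 + u (n + 1) ^ a) / u n) (h0 : u 0 ≠ 0)
    (h01 : (u 0).intDegree < (u 1).intDegree) (h1 : 0 < (u 1).intDegree) :
    StrictMono fun n => (u n).intDegree := by
  set d := fun n => (u n).intDegree
  suffices key : ∀ n, u n ≠ 0 ∧ 0 < d (n + 1) ∧ d n < d (n + 1) from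
    strictMono_nat_of_lt_succ fun n => (key n).2.2
  intro n
  induction n with
  | zero => exact ⟨h0, h1, h01⟩
  | succ n ih =>
    obtain ⟨hn, hpos, hlt⟩ := ih
    have hpow : 0 < (u (n + 1) ^ a).intDegree := by
      rw [intDegree_pow]
      positivity
    have hnum := intDegree_one_add_of_pos hpow
    have hnum_ne : 1 + u (n + 1) ^ a ≠ 0 := ne_zero_of_intDegree_ne_zero (hnum ▸ hpow.ne')
    have hstep : d (n + 2) = a * d (n + 1) - d n := by
      simp only [d, hrec, intDegree_div hnum_ne hn, hnum, intDegree_pow]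
    have hgrow : d (n + 1) < d (n + 2) := by
      have ha' : (2 : ℤ) ≤ a := by exact_mod_cast ha
      rw [hstep]
      nlinarith
    exact ⟨ne_zero_of_intDegree_ne_zero hpos.ne', hpos.trans hgrow, hgrow⟩

end RatFunc

noncomputable abbrev F1 : Type := FractionRing (MvPolynomial (Fin 1) ℚ)

/-- `finSuccEquivLast` sends the last variable `X 1` to `none`, which `optionEquivLeft` turns
into the polynomial variable. -/
noncomputable def mvPolynomialToRatFunc : MvPolynomial (Fin 2) ℚ →+* RatFunc F1 :=
  (algebraMap (Polynomial F1) (RatFunc F1)).comp <|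
    (Polynomial.mapRingHom (algebraMap _ F1)).comp <|
      (MvPolynomial.optionEquivLeft ℚ (Fin 1)).toRingHom.comp
        (MvPolynomial.rename finSuccEquivLast).toRingHom

theorem mvPolynomialToRatFunc_injective : Function.Injective mvPolynomialToRatFunc :=
  (IsFractionRing.injective (Polynomial F1) (RatFunc F1)).comp <|
    (Polynomial.map_injective _ (IsFractionRing.injective _ F1)).comp <|
      (MvPolynomial.optionEquivLeft ℚ (Fin 1)).injective.comp
        (MvPolynomial.rename_injective _ finSuccEquivLast.injective)

noncomputable def toRatFunc : F2 →+* RatFunc F1 :=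
  IsFractionRing.lift mvPolynomialToRatFunc_injective

theorem toRatFunc_X₁ :
    toRatFunc X₁ = RatFunc.C (algebraMap (MvPolynomial (Fin 1) ℚ) F1 (MvPolynomial.X 0)) := by
  simp [toRatFunc, X₁, mvPolynomialToRatFunc, IsFractionRing.lift_algebraMap,
    show finSuccEquivLast (0 : Fin 2) = some 0 from rfl, MvPolynomial.optionEquivLeft_X_some]

theorem toRatFunc_X₂ : toRatFunc X₂ = RatFunc.X := by
  simp [toRatFunc, X₂, mvPolynomialToRatFunc, IsFractionRing.lift_algebraMap,
    show finSuccEquivLast (1 : Fin 2) = none from rfl, MvPolynomial.optionEquivLeft_X_none]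

theorem strictMono_intDegree_toRatFunc_clusterSeq {a : ℕ} (ha : 2 ≤ a) :
    StrictMono fun n => (toRatFunc (clusterSeq a (n + 1))).intDegree := by
  refine RatFunc.strictMono_intDegree_of_clusterRecurrence ha (fun n => ?_) ?_ ?_ ?_
  · rw [clusterSeq, map_div₀, map_add, map_one, map_pow]
  · rw [clusterSeq, map_ne_zero_iff _ toRatFunc.injective, X₁,
      map_ne_zero_iff _ (IsFractionRing.injective _ _)]
    exact MvPolynomial.X_ne_zero 0
  · simp [clusterSeq, toRatFunc_X₁, toRatFunc_X₂]
  · simp [clusterSeq, toRatFunc_X₂]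

/-- For `a ≥ 2` the rank-2 cluster recurrence produces infinitely many distinct
cluster variables. -/
theorem clusterSeq_infinite (a : ℕ) (ha : 2 ≤ a) :
    {y : F2 | ∃ k ≥ 1, clusterSeq a k = y}.Infinite := by
  refine Set.infinite_of_injective_forall_mem (f := fun n => clusterSeq a (n + 1)) ?_
    fun n => ⟨n + 1, n.succ_pos, rfl⟩
  exact Function.Injective.of_comp (f := fun y => (toRatFunc y).intDegree)
    (strictMono_intDegree_toRatFunc_clusterSeq ha).injective
end

section
/- Let n be a 4×4 upper unitriangular complex matrix (entries 1 on the diagonal, 0 below). Then there exist invertible lower triangular complex matrices l₁, l₂ with n = l₁ · w̄₀ · l₂, where w̄₀ is the 4×4 permutation matrix of the permutation i ↦ 5 − i, if and only if the three minors D_{1,4}(n) = n₁₄, D_{12,34}(n) = det [[n₁₃, n₁₄],[n₂₃, n₂₄]], and D_{123,234}(n) = det of the submatrix of n with rows {1,2,3} and columns {2,3,4} are all nonzero. -/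
/-!
Multiplying on the left by a lower triangular matrix only mixes each of the first `k` rows with
the rows above it, and multiplying on the right only mixes each of the last `k` columns with the
columns to its right. So the minor `D_{[1,k],[m-k+1,m]}` of `l₁ w₀ l₂` is the corresponding minor
of `w₀` (the sign of the longest permutation of `k` letters) times diagonal entries of `l₁` and
`l₂`, all of them units. Conversely, when the three minors of `n` are nonzero, Gaussian
elimination writes `n = l₁ w₀ l₂` with explicit lower triangular factors whose denominators are
exactly these minors; the factors are invertible because `det n = 1`.
-/

/-- The permutation matrix of the longest element `w₀` of the Weyl group of `SL₄`,
i.e. of the permutation `i ↦ 5 - i` (on indices `1,…,4`). -/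
def w0bar : Matrix (Fin 4) (Fin 4) ℂ :=
  Matrix.of fun i j => if (i : ℕ) + (j : ℕ) = 3 then 1 else 0

open Matrix Equiv

namespace UnipotentCell

variable {R : Type*} {m k : ℕ}

def lastIdx (h : k ≤ m) (j : Fin k) : Fin m := ⟨m - k + j, by omega⟩

theorem strictMono_lastIdx (h : k ≤ m) : StrictMono (lastIdx h) := fun i j hij => by
  simp only [lastIdx, Fin.mk_lt_mk]
  omega

section Semiring

variable [Semiring R] {ι κ : Type*} {L : Matrix (Fin m) (Fin m) R}

theorem submatrix_castLE_mul_of_isLowerTriangular (hL : L.IsLowerTriangular) (h : k ≤ m)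
    (M : Matrix (Fin m) ι R) (g : κ → ι) :
    (L * M).submatrix (Fin.castLE h) g =
      L.submatrix (Fin.castLE h) (Fin.castLE h) * M.submatrix (Fin.castLE h) g := by
  ext a b
  refine (Fintype.sum_of_injective _ (Fin.castLE_injective h) _ _ (fun j hj => ?_)
    fun _ => rfl).symm
  have hkj : k ≤ j := by
    by_contra! hjk
    exact hj ⟨⟨j, hjk⟩, rfl⟩
  have hzero : L (Fin.castLE h a) j = 0 :=
    hL (OrderDual.toDual_lt_toDual.2 (Fin.lt_def.2 (by simp only [Fin.val_castLE]; omega)))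
  simp [hzero]

theorem submatrix_mul_lastIdx_of_isLowerTriangular (hL : L.IsLowerTriangular) (h : k ≤ m)
    (M : Matrix ι (Fin m) R) (g : κ → ι) :
    (M * L).submatrix g (lastIdx h) =
      M.submatrix g (lastIdx h) * L.submatrix (lastIdx h) (lastIdx h) := by
  ext a b
  refine (Fintype.sum_of_injective _ (strictMono_lastIdx h).injective _ _ (fun j hj => ?_)
    fun _ => rfl).symm
  have hjk : j < m - k := by
    by_contra! hkj
    exact hj ⟨⟨j - (m - k), by omega⟩, Fin.ext (by simp [lastIdx]; omega)⟩
  have hzero : L j (lastIdx h b) = 0 :=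
    hL (OrderDual.toDual_lt_toDual.2 (Fin.lt_def.2 (by simp only [lastIdx]; omega)))
  simp [hzero]

end Semiring

section Permutation

variable [Zero R] [One R]

theorem submatrix_permMatrix_revPerm (h : k ≤ m) :
    (Fin.revPerm.permMatrix R).submatrix (Fin.castLE h) (lastIdx h) =
      (Fin.revPerm : Perm (Fin k)).permMatrix R := by
  ext i j
  simp only [submatrix_apply, PEquiv.toMatrix_apply, toPEquiv_apply, Option.mem_def,
    Option.some.injEq, Fin.revPerm_apply, lastIdx, Fin.ext_iff, Fin.val_rev, Fin.val_castLE]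
  exact if_congr (by omega) rfl rfl

theorem permMatrix_revPerm_fin_four :
    (Fin.revPerm : Perm (Fin 4)).permMatrix R =
      !![0, 0, 0, 1; 0, 0, 1, 0; 0, 1, 0, 0; 1, 0, 0, 0] := by
  ext i j
  fin_cases i <;> fin_cases j <;> rfl

end Permutation

section CommRing

variable [CommRing R]

/-- The paper's flag minor `D_{[1,k],[m-k+1,m]}`: rows the first `k`, columns the last `k`. -/
def cornerMinor (A : Matrix (Fin m) (Fin m) R) (h : k ≤ m) : R :=
  (A.submatrix (Fin.castLE h) (lastIdx h)).det

theorem cornerMinor_mul_mul {L₁ L₂ : Matrix (Fin m) (Fin m) R} (hL₁ : L₁.IsLowerTriangular)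
    (hL₂ : L₂.IsLowerTriangular) (A : Matrix (Fin m) (Fin m) R) (h : k ≤ m) :
    cornerMinor (L₁ * A * L₂) h =
      (L₁.submatrix (Fin.castLE h) (Fin.castLE h)).det * cornerMinor A h *
        (L₂.submatrix (lastIdx h) (lastIdx h)).det := by
  rw [cornerMinor, cornerMinor, Matrix.mul_assoc, submatrix_castLE_mul_of_isLowerTriangular hL₁,
    submatrix_mul_lastIdx_of_isLowerTriangular hL₂, det_mul, det_mul, mul_assoc]

theorem isUnit_det_submatrix_of_isLowerTriangular {L : Matrix (Fin m) (Fin m) R}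
    (hL : L.IsLowerTriangular) (hu : IsUnit L) {f : Fin k → Fin m} (hf : StrictMono f) :
    IsUnit (L.submatrix f f).det := by
  have hdiag : ∀ i, IsUnit (L i i) := by
    rw [isUnit_iff_isUnit_det, det_of_isLowerTriangular L hL] at hu
    exact IsUnit.prod_univ_iff.1 hu
  rw [det_of_isLowerTriangular (L.submatrix f f)
    fun i j hij => hL (OrderDual.toDual_lt_toDual.2 (hf hij))]
  exact IsUnit.prod_univ_iff.2 fun i => hdiag (f i)

theorem isUnit_cornerMinor_mul_mul_iff {L₁ L₂ : Matrix (Fin m) (Fin m) R}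
    (hL₁ : L₁.IsLowerTriangular) (hu₁ : IsUnit L₁) (hL₂ : L₂.IsLowerTriangular) (hu₂ : IsUnit L₂)
    (A : Matrix (Fin m) (Fin m) R) (h : k ≤ m) :
    IsUnit (cornerMinor (L₁ * A * L₂) h) ↔ IsUnit (cornerMinor A h) := by
  rw [cornerMinor_mul_mul hL₁ hL₂, IsUnit.mul_iff, IsUnit.mul_iff,
    iff_true_intro (isUnit_det_submatrix_of_isLowerTriangular hL₁ hu₁ (Fin.strictMono_castLE h)),
    iff_true_intro (isUnit_det_submatrix_of_isLowerTriangular hL₂ hu₂ (strictMono_lastIdx h)),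
    true_and, and_true]

theorem isUnit_cornerMinor_permMatrix_revPerm (h : k ≤ m) :
    IsUnit (cornerMinor (Fin.revPerm.permMatrix R) h) := by
  rw [cornerMinor, submatrix_permMatrix_revPerm, det_permutation]
  rcases Int.units_eq_one_or (Perm.sign (Fin.revPerm : Perm (Fin k))) with hs | hs <;>
    simp [hs]

theorem isUnit_of_isUpperTriangular_of_diag_eq_one {ι : Type*} [Fintype ι] [DecidableEq ι]
    [LinearOrder ι] {N : Matrix ι ι R} (hN : N.IsUpperTriangular) (hdiag : ∀ i, N i i = 1) :
    IsUnit N := by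
  simp [isUnit_iff_isUnit_det, det_of_isUpperTriangular hN, hdiag]

variable (A : Matrix (Fin 4) (Fin 4) R)

theorem cornerMinor_one : cornerMinor A (show 1 ≤ 4 by norm_num) = A 0 3 := by
  simp [cornerMinor, det_unique, lastIdx]

theorem cornerMinor_two :
    cornerMinor A (show 2 ≤ 4 by norm_num) = det !![A 0 2, A 0 3; A 1 2, A 1 3] := by
  rw [cornerMinor]
  congr 1
  ext i j
  fin_cases i <;> fin_cases j <;> rfl

theorem cornerMinor_three :
    cornerMinor A (show 3 ≤ 4 by norm_num) =
      det !![A 0 1, A 0 2, A 0 3; A 1 1, A 1 2, A 1 3; A 2 1, A 2 2, A 2 3] := by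
  rw [cornerMinor]
  congr 1
  ext i j
  fin_cases i <;> fin_cases j <;> rfl

end CommRing

theorem exists_eq_unitriangular_fin_four [Zero R] [One R] {N : Matrix (Fin 4) (Fin 4) R}
    (hdiag : ∀ i, N i i = 1) (hlow : N.IsUpperTriangular) :
    ∃ a b c d e f : R, N = !![1, a, b, c; 0, 1, d, e; 0, 0, 1, f; 0, 0, 0, 1] := by
  refine ⟨N 0 1, N 0 2, N 0 3, N 1 2, N 1 3, N 2 3, ?_⟩
  ext i j
  fin_cases i <;> fin_cases j <;> simp [hdiag] <;> exact hlow (by decide)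

section Factorization

variable {K : Type*} [Field K] (a b c d e f : K)

/-- Found by Gaussian elimination; `c`, `δ₂`, `δ₃` are the minors `D_{1,4}`, `D_{12,34}`,
`D_{123,234}` of the unitriangular matrix with entries `a, …, f`. -/
def leftFactor : Matrix (Fin 4) (Fin 4) K :=
  let δ₂ := b * e - c * d
  let δ₃ := a * d * f - a * e - b * f + c
  !![c, 0, 0, 0;
     e, -δ₂ / c, 0, 0;
     f, (c - b * f) / c, δ₃ / δ₂, 0;
     1, -b / c, (a * d - b) / δ₂, -1 / δ₃]

def rightFactor : Matrix (Fin 4) (Fin 4) K :=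
  let δ₂ := b * e - c * d
  let δ₃ := a * d * f - a * e - b * f + c
  !![1, 0, 0, 0;
     (d * f - e) / δ₃, 1, 0, 0;
     e / δ₂, (a * e - c) / δ₂, 1, 0;
     1 / c, a / c, b / c, 1]

theorem isLowerTriangular_leftFactor : (leftFactor a b c d e f).IsLowerTriangular := by
  intro i j hij
  fin_cases i <;> fin_cases j <;> first | rfl | exact absurd hij (by decide)

theorem isLowerTriangular_rightFactor : (rightFactor a b c d e f).IsLowerTriangular := by
  intro i j hij
  fin_cases i <;> fin_cases j <;> first | rfl | exact absurd hij (by decide)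

theorem unitriangular_eq_leftFactor_mul_mul_rightFactor (h₁ : c ≠ 0)
    (h₂ : b * e - c * d ≠ 0) (h₃ : a * d * f - a * e - b * f + c ≠ 0) :
    !![1, a, b, c; 0, 1, d, e; 0, 0, 1, f; 0, 0, 0, 1] =
      leftFactor a b c d e f * (Fin.revPerm : Perm (Fin 4)).permMatrix K *
        rightFactor a b c d e f := by
  rw [permMatrix_revPerm_fin_four, leftFactor, rightFactor]
  -- Opaque minors keep `simp` from rewriting them into shapes `field_simp` cannot see are nonzero.
  generalize hδ₂ : b * e - c * d = δ₂ at h₂ ⊢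
  generalize hδ₃ : a * d * f - a * e - b * f + c = δ₃ at h₃ ⊢
  ext i j
  fin_cases i <;> fin_cases j <;> simp [mul_apply, Fin.sum_univ_four] <;> field_simp <;>
    subst δ₂ δ₃ <;> ring

end Factorization

theorem exists_isLowerTriangular_factorization {K : Type*} [Field K]
    {N : Matrix (Fin 4) (Fin 4) K} (hdiag : ∀ i, N i i = 1) (hlow : N.IsUpperTriangular)
    (h₁ : cornerMinor N (show 1 ≤ 4 by norm_num) ≠ 0)
    (h₂ : cornerMinor N (show 2 ≤ 4 by norm_num) ≠ 0)
    (h₃ : cornerMinor N (show 3 ≤ 4 by norm_num) ≠ 0) :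
    ∃ L₁ L₂ : Matrix (Fin 4) (Fin 4) K, L₁.IsLowerTriangular ∧ L₂.IsLowerTriangular ∧
      N = L₁ * (Fin.revPerm : Perm (Fin 4)).permMatrix K * L₂ := by
  obtain ⟨a, b, c, d, e, f, rfl⟩ := exists_eq_unitriangular_fin_four hdiag hlow
  have hc : c ≠ 0 := by simpa [cornerMinor_one] using h₁
  have hδ₂ : b * e - c * d ≠ 0 := by simpa [cornerMinor_two, det_fin_two_of] using h₂
  have hδ₃ : a * d * f - a * e - b * f + c ≠ 0 := by
    simpa [cornerMinor_three, det_fin_three] using h₃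
  exact ⟨_, _, isLowerTriangular_leftFactor a b c d e f, isLowerTriangular_rightFactor a b c d e f,
    unitriangular_eq_leftFactor_mul_mul_rightFactor a b c d e f hc hδ₂ hδ₃⟩

end UnipotentCell

open UnipotentCell

theorem w0bar_eq_permMatrix_revPerm : w0bar = (Fin.revPerm : Perm (Fin 4)).permMatrix ℂ := by
  rw [permMatrix_revPerm_fin_four]
  ext i j
  fin_cases i <;> fin_cases j <;> simp [w0bar]

/-- A `4 × 4` upper unitriangular complex matrix lies in the Bruhat cell
`B₋ w₀ B₋` if and only if the three flag minors `D_{1,4}`, `D_{12,34}` and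
`D_{123,234}` are nonzero. -/
theorem unipotent_cell_SL4 (n : Matrix (Fin 4) (Fin 4) ℂ)
    (hdiag : ∀ i : Fin 4, n i i = 1)
    (hlow : ∀ i j : Fin 4, j < i → n i j = 0) :
    (∃ l₁ l₂ : Matrix (Fin 4) (Fin 4) ℂ,
        (∀ i j : Fin 4, i < j → l₁ i j = 0) ∧ IsUnit l₁ ∧
        (∀ i j : Fin 4, i < j → l₂ i j = 0) ∧ IsUnit l₂ ∧
        n = l₁ * w0bar * l₂) ↔
      (n 0 3 ≠ 0 ∧
       Matrix.det !![n 0 2, n 0 3; n 1 2, n 1 3] ≠ 0 ∧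
       Matrix.det !![n 0 1, n 0 2, n 0 3; n 1 1, n 1 2, n 1 3; n 2 1, n 2 2, n 2 3] ≠ 0) := by
  rw [← cornerMinor_three n, ← cornerMinor_two n, ← cornerMinor_one n,
    w0bar_eq_permMatrix_revPerm]
  constructor
  · rintro ⟨l₁, l₂, hl₁, hu₁, hl₂, hu₂, rfl⟩
    have hcorner (k : ℕ) (hk : k ≤ 4) : cornerMinor (l₁ * Fin.revPerm.permMatrix ℂ * l₂) hk ≠ 0 :=
      ((isUnit_cornerMinor_mul_mul_iff (fun i j h => hl₁ i j h) hu₁ (fun i j h => hl₂ i j h) hu₂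
        _ hk).2 (isUnit_cornerMinor_permMatrix_revPerm hk)).ne_zero
    exact ⟨hcorner 1 _, hcorner 2 _, hcorner 3 _⟩
  · rintro ⟨h₁, h₂, h₃⟩
    obtain ⟨l₁, l₂, hl₁, hl₂, hfac⟩ :=
      exists_isLowerTriangular_factorization hdiag (fun i j h => hlow i j h) h₁ h₂ h₃
    have hn : IsUnit n := isUnit_of_isUpperTriangular_of_diag_eq_one (fun i j h => hlow i j h) hdiag
    rw [hfac, IsUnit.mul_iff, IsUnit.mul_iff] at hn
    obtain ⟨⟨hu₁, -⟩, hu₂⟩ := hn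
    exact ⟨l₁, l₂, fun i j h => hl₁ h, hu₁, fun i j h => hl₂ h, hu₂, hfac⟩
end

section
/- Let t₁, t₂, t₃, t₄ be nonzero complex numbers and let g = x₂(t₄) x₁(t₃) x₂(t₂) x₁(t₁) with entries a, b, c, d ∈ ℂ[z] and coefficients a_k, b_k, c_k, d_k of z^k. Then a₁ = t₂t₃ ≠ 0, and the factorization parameters are recovered by t₄ = c₂/a₁, t₃ = (b₀a₁ − b₁)/a₁, t₂ = (c₁a₁ − c₂)/a₁, and t₁ = b₁/a₁. -/
open Polynomial

/-- The one-parameter subgroup `x₁(t) = exp(t e₁)` inside `SL₂(ℂ[z])`. -/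
noncomputable def x₁ (t : ℂ) : Matrix (Fin 2) (Fin 2) (Polynomial ℂ) :=
  !![1, C t; 0, 1]

/-- The one-parameter subgroup `x₂(t) = exp(t e₂)` inside `SL₂(ℂ[z])`. -/
noncomputable def x₂ (t : ℂ) : Matrix (Fin 2) (Fin 2) (Polynomial ℂ) :=
  !![1, 0; C t * X, 1]

/-
Multiplying out, `a₁ = t₂t₃`, `b₁ = t₁a₁` and `c₂ = t₄a₁`, so once `a₁ ≠ 0` the outer parameters
`t₁`, `t₄` are quotients by `a₁`, and then `t₃ = b₀ - t₁` and `t₂ = c₁ - t₄`.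
-/

theorem x₂_mul_x₁_mul_x₂_mul_x₁ (t₁ t₂ t₃ t₄ : ℂ) :
    x₂ t₄ * x₁ t₃ * x₂ t₂ * x₁ t₁ =
      !![1 + C (t₂ * t₃) * X, C (t₁ + t₃) + C (t₁ * t₂ * t₃) * X;
        C (t₂ + t₄) * X + C (t₂ * t₃ * t₄) * X ^ 2,
        1 + C (t₁ * t₂ + t₁ * t₄ + t₃ * t₄) * X + C (t₁ * t₂ * t₃ * t₄) * X ^ 2] := by
  simp only [x₁, x₂, Matrix.mul_fin_two, map_mul, map_add, EmbeddingLike.apply_eq_iff_eq,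
    Matrix.vecCons_inj, and_true]
  refine ⟨⟨?_, ?_⟩, ?_, ?_⟩ <;> ring

section Coefficients

variable (t₁ t₂ t₃ t₄ : ℂ)

local notation "g" => x₂ t₄ * x₁ t₃ * x₂ t₂ * x₁ t₁

theorem coeff_one_entry_zero_zero : (g 0 0).coeff 1 = t₂ * t₃ := by
  simp [x₂_mul_x₁_mul_x₂_mul_x₁, coeff_one]

theorem coeff_zero_entry_zero_one : (g 0 1).coeff 0 = t₁ + t₃ := by
  simp [x₂_mul_x₁_mul_x₂_mul_x₁]

theorem coeff_one_entry_zero_one : (g 0 1).coeff 1 = t₁ * (t₂ * t₃) := by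
  simp [x₂_mul_x₁_mul_x₂_mul_x₁]
  ring

theorem coeff_one_entry_one_zero : (g 1 0).coeff 1 = t₂ + t₄ := by
  rw [x₂_mul_x₁_mul_x₂_mul_x₁]
  simp [-map_mul, coeff_X_pow]

theorem coeff_two_entry_one_zero : (g 1 0).coeff 2 = t₂ * t₃ * t₄ := by
  rw [x₂_mul_x₁_mul_x₂_mul_x₁]
  simp [-map_mul, coeff_X_pow]

end Coefficients

theorem factorization_parameters_general (t₁ t₂ t₃ t₄ : ℂ)
    (h₂ : t₂ ≠ 0) (h₃ : t₃ ≠ 0) :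
    let g := x₂ t₄ * x₁ t₃ * x₂ t₂ * x₁ t₁
    let a := g 0 0; let b := g 0 1; let c := g 1 0
    a.coeff 1 = t₂ * t₃ ∧ a.coeff 1 ≠ 0 ∧
    t₄ = c.coeff 2 / a.coeff 1 ∧
    t₃ = (b.coeff 0 * a.coeff 1 - b.coeff 1) / a.coeff 1 ∧
    t₂ = (c.coeff 1 * a.coeff 1 - c.coeff 2) / a.coeff 1 ∧
    t₁ = b.coeff 1 / a.coeff 1 := by
  intro g a b c
  simp only [g, a, b, c, coeff_one_entry_zero_zero, coeff_zero_entry_zero_one,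
    coeff_one_entry_zero_one, coeff_one_entry_one_zero, coeff_two_entry_one_zero]
  have ha₁ : t₂ * t₃ ≠ 0 := mul_ne_zero h₂ h₃
  refine ⟨trivial, ha₁, ?_, ?_, ?_, ?_⟩ <;> field_simp <;> ring

/-- Recovery of the factorization parameters of `g = x₂(t₄)x₁(t₃)x₂(t₂)x₁(t₁)`
from the coefficients of its matrix entries. -/
theorem factorization_parameters (t₁ t₂ t₃ t₄ : ℂ)
    (h₁ : t₁ ≠ 0) (h₂ : t₂ ≠ 0) (h₃ : t₃ ≠ 0) (h₄ : t₄ ≠ 0) :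
    let g := x₂ t₄ * x₁ t₃ * x₂ t₂ * x₁ t₁
    let a := g 0 0; let b := g 0 1; let c := g 1 0
    a.coeff 1 = t₂ * t₃ ∧ a.coeff 1 ≠ 0 ∧
    t₄ = c.coeff 2 / a.coeff 1 ∧
    t₃ = (b.coeff 0 * a.coeff 1 - b.coeff 1) / a.coeff 1 ∧
    t₂ = (c.coeff 1 * a.coeff 1 - c.coeff 2) / a.coeff 1 ∧
    t₁ = b.coeff 1 / a.coeff 1 :=
  factorization_parameters_general t₁ t₂ t₃ t₄ h₂ h₃
end

section
/- For all t₁, t₂, t₃, t₄ ∈ ℂ, with g = x₂(t₄) x₁(t₃) x₂(t₂) x₁(t₁) and coefficients b_k, d_k as above, the 3×3 determinant det [[b₀, b₁, b₂],[1, d₁, d₂],[0, b₀, b₁]] equals t₃ t₂² t₁³. (This is the evaluation of the cluster variable φ_{V₃} at the point 𝐱_𝐢(𝐭).) -/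
/-!
Left multiplication by `x₂(t₄)` replaces `d` by `d + t₄ z b` and leaves `b` unchanged. In the
matrix this adds `t₄` times the last row to the middle one, so the determinant does not depend
on `t₄`. For `x₁(t₃) x₂(t₂) x₁(t₁)` one has `b = t₁ + t₃ + t₁ t₂ t₃ z` and `d = 1 + t₁ t₂ z`,
and the determinant is `b₀ b₁ d₁ - b₁² = t₃ t₂² t₁³`.
-/

open Polynomial

section PhiV3

variable {R : Type*} [CommRing R]

def phiV3 (b d : R[X]) : R :=
  Matrix.det !![b.coeff 0, b.coeff 1, b.coeff 2;
                1, d.coeff 1, d.coeff 2;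
                0, b.coeff 0, b.coeff 1]

theorem phiV3_eq (b d : R[X]) :
    phiV3 b d = b.coeff 0 * (d.coeff 1 * b.coeff 1 - d.coeff 2 * b.coeff 0)
      - b.coeff 1 ^ 2 + b.coeff 2 * b.coeff 0 := by
  simp only [phiV3, Matrix.det_fin_three, Matrix.of_apply, Matrix.cons_val',
    Matrix.cons_val_zero, Matrix.cons_val_one, Matrix.cons_val_two, Matrix.empty_val',
    Matrix.cons_val_fin_one, Matrix.tail_cons, Matrix.vecHead]
  ring

theorem phiV3_add_C_mul_X_mul (b d : R[X]) (s : R) :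
    phiV3 b (d + C s * X * b) = phiV3 b d := by
  simp only [phiV3_eq, coeff_add, mul_assoc, coeff_C_mul, coeff_X_mul]
  ring

theorem phiV3_C_add_C_mul_X (a c e : R) :
    phiV3 (C a + C c * X) (1 + C e * X) = a * c * e - c ^ 2 := by
  simp only [phiV3_eq, coeff_add, coeff_C_mul, coeff_C, coeff_X, coeff_one]
  norm_num
  ring

end PhiV3

theorem x₂_mul_apply_zero_one (s : ℂ) (M : Matrix (Fin 2) (Fin 2) ℂ[X]) :
    (x₂ s * M) 0 1 = M 0 1 := by
  simp [x₂, Matrix.mul_apply, Fin.sum_univ_two]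

theorem x₂_mul_apply_one_one (s : ℂ) (M : Matrix (Fin 2) (Fin 2) ℂ[X]) :
    (x₂ s * M) 1 1 = M 1 1 + C s * X * M 0 1 := by
  simp [x₂, Matrix.mul_apply, Fin.sum_univ_two, add_comm]

theorem x₁_mul_x₂_mul_x₁_apply_zero_one (t₁ t₂ t₃ : ℂ) :
    (x₁ t₃ * x₂ t₂ * x₁ t₁) 0 1 = C (t₁ + t₃) + C (t₁ * t₂ * t₃) * X := by
  simp [x₁, x₂, Matrix.mul_apply, Fin.sum_univ_two]
  ring

theorem x₁_mul_x₂_mul_x₁_apply_one_one (t₁ t₂ t₃ : ℂ) :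
    (x₁ t₃ * x₂ t₂ * x₁ t₁) 1 1 = 1 + C (t₁ * t₂) * X := by
  simp [x₁, x₂, Matrix.mul_apply, Fin.sum_univ_two]
  ring

/-- Evaluation of the cluster variable `φ_{V₃}` at `𝐱_𝐢(𝐭)`. -/
theorem phi_V3_eval (t₁ t₂ t₃ t₄ : ℂ) :
    let g := x₂ t₄ * x₁ t₃ * x₂ t₂ * x₁ t₁
    let b := g 0 1; let d := g 1 1
    Matrix.det !![b.coeff 0, b.coeff 1, b.coeff 2;
                  1, d.coeff 1, d.coeff 2;
                  0, b.coeff 0, b.coeff 1] = t₃ * t₂ ^ 2 * t₁ ^ 3 := by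
  show phiV3 _ _ = _
  rw [Matrix.mul_assoc, Matrix.mul_assoc, ← Matrix.mul_assoc (x₁ t₃), x₂_mul_apply_zero_one,
    x₂_mul_apply_one_one, phiV3_add_C_mul_X_mul, x₁_mul_x₂_mul_x₁_apply_zero_one,
    x₁_mul_x₂_mul_x₁_apply_one_one, phiV3_C_add_C_mul_X]
  ring
end

section
/- For all t₁, t₂, t₃, t₄ ∈ ℂ, with g = x₂(t₄) x₁(t₃) x₂(t₂) x₁(t₁) and coefficients b_k, d_k as above, the 4×4 determinant det [[b₀, b₁, b₂, b₃],[1, d₁, d₂, d₃],[0, b₀, b₁, b₂],[0, 1, d₁, d₂]] equals t₄ t₃² t₂³ t₁⁴. (This is the evaluation of the cluster variable φ_{V₄} at the point 𝐱_𝐢(𝐭).) -/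
open Polynomial

/-!
Multiplying out, `b = (t₁ + t₃) + t₁t₂t₃ z` and `d = 1 + (t₁t₂ + t₁t₄ + t₃t₄) z + t₁t₂t₃t₄ z²`.
Since `b₂ = b₃ = d₃ = 0`, the last column of the determinant is `(0, 0, 0, d₂)`, and expanding
along it gives `d₂ (b₀b₁d₁ - b₀²d₂ - b₁²)`. The bracket collapses to `t₁³t₂²t₃`, because
`d₁ - b₀t₄ = t₁t₂`.
-/

theorem det_fin_four_of_linear_quadratic_coeffs {R : Type*} [CommRing R] (b₀ b₁ d₁ d₂ : R) :
    Matrix.det !![b₀, b₁, 0, 0;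
                  1, d₁, d₂, 0;
                  0, b₀, b₁, 0;
                  0, 1, d₁, d₂] = d₂ * (b₀ * b₁ * d₁ - b₀ ^ 2 * d₂ - b₁ ^ 2) := by
  simp [Matrix.det_succ_row_zero, Fin.sum_univ_succ, Fin.succAbove]
  ring

section Entries

variable (t₁ t₂ t₃ t₄ : ℂ)

theorem x₂_mul_x₁_mul_x₂_mul_x₁_apply_zero_one :
    (x₂ t₄ * x₁ t₃ * x₂ t₂ * x₁ t₁) 0 1 = C (t₁ + t₃) + C (t₁ * t₂ * t₃) * X := by
  simp [x₁, x₂]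
  ring

theorem x₂_mul_x₁_mul_x₂_mul_x₁_apply_one_one :
    (x₂ t₄ * x₁ t₃ * x₂ t₂ * x₁ t₁) 1 1 =
      1 + C (t₁ * t₂ + t₁ * t₄ + t₃ * t₄) * X + C (t₁ * t₂ * t₃ * t₄) * X ^ 2 := by
  simp [x₁, x₂]
  ring

end Entries

/-- Evaluation of the cluster variable `φ_{V₄}` at `𝐱_𝐢(𝐭)`. -/
theorem phi_V4_eval (t₁ t₂ t₃ t₄ : ℂ) :
    let g := x₂ t₄ * x₁ t₃ * x₂ t₂ * x₁ t₁
    let b := g 0 1; let d := g 1 1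
    Matrix.det !![b.coeff 0, b.coeff 1, b.coeff 2, b.coeff 3;
                  1, d.coeff 1, d.coeff 2, d.coeff 3;
                  0, b.coeff 0, b.coeff 1, b.coeff 2;
                  0, 1, d.coeff 1, d.coeff 2] = t₄ * t₃ ^ 2 * t₂ ^ 3 * t₁ ^ 4 := by
  intro g b d
  rw [show b = _ from x₂_mul_x₁_mul_x₂_mul_x₁_apply_zero_one t₁ t₂ t₃ t₄,
    show d = _ from x₂_mul_x₁_mul_x₂_mul_x₁_apply_one_one t₁ t₂ t₃ t₄]
  simp only [coeff_add, coeff_one, coeff_C, coeff_C_mul, coeff_X, coeff_X_pow]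
  norm_num
  rw [det_fin_four_of_linear_quadratic_coeffs]
  ring
end
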